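/- arXiv:2107.06609 — 3 statements merged into one kernel-verified Lean document; each statement's English description precedes it below -/
import Mathlib

section
/- For all 𝔨_1, 𝔨_2 ∈ 𝒦, D(𝔨_1) ∩ D(𝔨_2) = D(𝔨*), where 𝔨* := ⟨𝔨_1, 𝔨_2⟩ is the smallest Lie subalgebra of 𝔤 containing both 𝔨_1 and 𝔨_2 (with the convention D(𝔤) = ∅ in case 𝔨* = 𝔤). -/
open scoped RealInnerProductSpace Classical
open Module Set Filter

/-- A Lie bracket on a real inner product space for which every adjoint map
`ad X : y ↦ ⁅X, y⁆` is skew-adjoint with respect to the inner product; this is the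
Lie-algebraic model of a compact Lie group with a biinvariant metric. -/
structure CompactLieBracket (L : Type*) [NormedAddCommGroup L] [InnerProductSpace ℝ L] where
  br : L →ₗ[ℝ] L →ₗ[ℝ] L
  br_self : ∀ x : L, br x x = 0
  jacobi : ∀ x y z : L, br x (br y z) + br y (br z x) + br z (br x y) = 0
  skew : ∀ x y z : L, ⟪br x y, z⟫ = ⟪x, br y z⟫

variable {L : Type*} [NormedAddCommGroup L] [InnerProductSpace ℝ L] [FiniteDimensional ℝ L]
variable (𝔩 : CompactLieBracket L) (H : Submodule ℝ L)

/-- `K` is a Lie subalgebra of `(L, 𝔩.br)`. -/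
def IsLieSub (K : Submodule ℝ L) : Prop := ∀ x ∈ K, ∀ y ∈ K, 𝔩.br x y ∈ K

/-- `K` is an intermediate subalgebra: `𝔥 ⊊ 𝔨 ⊊ 𝔤`. -/
def IsIntermediate (K : Submodule ℝ L) : Prop := IsLieSub 𝔩 K ∧ H < K ∧ K < ⊤

/-- The disk `D(𝔨)`, with the convention `D(𝔤) = ∅`. -/
noncomputable def disk (K : Submodule ℝ L) : Set (L →L[ℝ] L) :=
  if K = ⊤ then ∅ else
    { A | (∀ x y : L, ⟪A x, y⟫ = ⟪x, A y⟫) ∧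
          (∀ Z ∈ H, ∀ y : L, A (𝔩.br Z y) = 𝔩.br Z (A y)) ∧
          (∀ x : L, 0 ≤ ⟪A x, x⟫) ∧
          (∀ x ∈ K, A x = 0) ∧
          LinearMap.trace ℝ L (A : L →ₗ[ℝ] L) = 1 ∧
          (∀ X ∈ K, ∀ y : L, A (𝔩.br X y) = 𝔩.br X (A y)) }

/-- The smallest Lie subalgebra containing `K₁` and `K₂`. -/
def genSubalgebra (K₁ K₂ : Submodule ℝ L) : Submodule ℝ L :=
  sInf { K : Submodule ℝ L | IsLieSub 𝔩 K ∧ K₁ ≤ K ∧ K₂ ≤ K }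

lemma br_antisymm (x y : L) : 𝔩.br x y = - 𝔩.br y x := by
  have h := 𝔩.br_self (x + y)
  simp only [map_add, LinearMap.add_apply, 𝔩.br_self] at h
  rw [zero_add, add_zero] at h
  rw [eq_neg_iff_add_eq_zero, add_comm]
  exact h

lemma br_br (x y z : L) :
    𝔩.br (𝔩.br x y) z = 𝔩.br x (𝔩.br y z) - 𝔩.br y (𝔩.br x z) := by
  have h := 𝔩.jacobi x y z
  rw [br_antisymm 𝔩 z (𝔩.br x y), show 𝔩.br z x = - 𝔩.br x z from br_antisymm 𝔩 z x,
    map_neg] at h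
  linear_combination (norm := module) -h

-- STATEMENT 1
theorem disk_inter_disk_eq_disk_gen
    (hH : IsLieSub 𝔩 H) (hprop : H ≠ ⊤)
    (K₁ K₂ : Submodule ℝ L) (h₁ : IsIntermediate 𝔩 H K₁) (h₂ : IsIntermediate 𝔩 H K₂) :
    disk 𝔩 H K₁ ∩ disk 𝔩 H K₂ = disk 𝔩 H (genSubalgebra 𝔩 K₁ K₂) := by
  set G := genSubalgebra 𝔩 K₁ K₂ with hGdef
  have hK1top : K₁ ≠ ⊤ := h₁.2.2.ne
  have hK2top : K₂ ≠ ⊤ := h₂.2.2.ne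
  have hK1G : K₁ ≤ G := le_sInf fun K hK => hK.2.1
  have hK2G : K₂ ≤ G := le_sInf fun K hK => hK.2.2
  ext A
  constructor
  · rintro ⟨hA1, hA2⟩
    rw [disk, if_neg hK1top] at hA1
    rw [disk, if_neg hK2top] at hA2
    obtain ⟨sa, hcomm, pos, ker1, tr, comm1⟩ := hA1
    obtain ⟨-, -, -, ker2, -, comm2⟩ := hA2
    -- the set of X with A X = 0 and A ∘ ad X = ad X ∘ A is a Lie subalgebra
    set S : Submodule ℝ L :=
      { carrier := {x | A x = 0 ∧ ∀ y, A (𝔩.br x y) = 𝔩.br x (A y)}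
        add_mem' := by
          rintro a b ⟨ha0, ha⟩ ⟨hb0, hb⟩
          refine ⟨by simp [ha0, hb0], fun y => ?_⟩
          simp [map_add, LinearMap.add_apply, ha y, hb y]
        zero_mem' := by simp
        smul_mem' := by
          rintro c a ⟨ha0, ha⟩
          refine ⟨by simp [ha0], fun y => ?_⟩
          simp [map_smul, LinearMap.smul_apply, ha y] } with hSdef
    have hSmem : ∀ x : L, x ∈ S ↔ (A x = 0 ∧ ∀ y, A (𝔩.br x y) = 𝔩.br x (A y)) := by
      intro x; rfl
    have hSlie : IsLieSub 𝔩 S := by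
      intro a ha b hb
      rw [hSmem] at ha hb ⊢
      obtain ⟨ha0, haC⟩ := ha
      obtain ⟨hb0, hbC⟩ := hb
      constructor
      · have := haC b
        rw [hb0, map_zero] at this
        exact this
      · intro y
        rw [br_br 𝔩 a b y, map_sub]
        simp only [haC, hbC]
        rw [br_br 𝔩 a b (A y)]
    have hK1S : K₁ ≤ S := fun x hx => (hSmem x).2 ⟨ker1 x hx, comm1 x hx⟩
    have hK2S : K₂ ≤ S := fun x hx => (hSmem x).2 ⟨ker2 x hx, comm2 x hx⟩
    have hGS : G ≤ S := sInf_le ⟨hSlie, hK1S, hK2S⟩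
    have hGtop : G ≠ ⊤ := by
      intro hG
      have hA0 : ∀ x : L, A x = 0 := fun x =>
        ((hSmem x).1 (hGS (hG ▸ Submodule.mem_top))).1
      have : (A : L →ₗ[ℝ] L) = 0 := by ext x; exact hA0 x
      rw [this] at tr
      simp at tr
    rw [disk, if_neg hGtop]
    exact ⟨sa, hcomm, pos, fun x hx => ((hSmem x).1 (hGS hx)).1, tr,
      fun x hx => ((hSmem x).1 (hGS hx)).2⟩
  · intro hA
    have hGtop : G ≠ ⊤ := by
      intro hG
      rw [disk, if_pos hG] at hA
      exact hA
    rw [disk, if_neg hGtop] at hA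
    obtain ⟨sa, hcomm, pos, ker, tr, comm⟩ := hA
    constructor
    · rw [disk, if_neg hK1top]
      exact ⟨sa, hcomm, pos, fun x hx => ker x (hK1G hx), tr, fun x hx => comm x (hK1G hx)⟩
    · rw [disk, if_neg hK2top]
      exact ⟨sa, hcomm, pos, fun x hx => ker x (hK2G hx), tr, fun x hx => comm x (hK2G hx)⟩
end

section
/- For all flags φ, ψ: φ ≤ ψ holds if and only if max(φ) ⊆ max(ψ) and every subalgebra that occurs in ψ but not in φ strictly contains max(φ). -/
open scoped Classical
open Set

variable {L : Type*} [LieRing L] [LieAlgebra ℝ L] [FiniteDimensional ℝ L]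

/-- A flag: a nonempty chain of Lie subalgebras, each strictly containing `H`. -/
def IsFlag (H : LieSubalgebra ℝ L) (s : Finset (LieSubalgebra ℝ L)) : Prop :=
  s.Nonempty ∧ IsChain (· ≤ ·) (s : Set (LieSubalgebra ℝ L)) ∧ ∀ K ∈ s, H < K

/-- The maximum of a flag. -/
noncomputable def flagMax (s : Finset (LieSubalgebra ℝ L)) : LieSubalgebra ℝ L :=
  sSup (s : Set (LieSubalgebra ℝ L))

/-- An elementary move between flags. -/
def FlagStep (H : LieSubalgebra ℝ L) (s t : Finset (LieSubalgebra ℝ L)) : Prop :=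
  IsFlag H s ∧ IsFlag H t ∧
    ((∃ K : LieSubalgebra ℝ L, flagMax s < K ∧ t = insert K s) ∨
      (∃ K ∈ s, K ≠ flagMax s ∧ t = s.erase K))

/-- The partial order on flags. -/
def FlagLE (H : LieSubalgebra ℝ L) (s t : Finset (LieSubalgebra ℝ L)) : Prop :=
  Relation.ReflTransGen (FlagStep H) s t

/-! To go from `s` to `t`, first adjoin the members of `t` outside `s` in increasing order (each
lies above `flagMax s`, so `s ∪ t` is again a chain), then delete the members of `s` outside `t`,
none of which is the maximum `flagMax t` of `s ∪ t`. Conversely, every elementary move keeps the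
maximum from decreasing and adjoins only subalgebras above the current maximum, and these two
properties compose along a chain of moves. -/

theorem IsChain.sSup_mem_of_finset {α : Type*} [CompleteLattice α] {s : Finset α}
    (hne : s.Nonempty) (hc : IsChain (· ≤ ·) (s : Set α)) : sSup (s : Set α) ∈ s := by
  rw [← Finset.sup'_id_eq_csSup s hne]
  refine Finset.sup'_mem _ (fun x hx y hy => ?_) s hne id fun _ => id
  rcases eq_or_ne x y with rfl | hxy
  · rwa [sup_idem]
  · rcases hc hx hy hxy with h | h
    · rwa [sup_eq_right.2 h]
    · rwa [sup_eq_left.2 h]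

section

omit [FiniteDimensional ℝ L]

variable {H : LieSubalgebra ℝ L} {s t u : Finset (LieSubalgebra ℝ L)}

theorem le_flagMax {K : LieSubalgebra ℝ L} (hK : K ∈ s) : K ≤ flagMax s := le_sSup hK

theorem flagMax_mono (h : s ⊆ t) : flagMax s ≤ flagMax t :=
  sSup_le_sSup (Finset.coe_subset.2 h)

theorem flagMax_union (s t : Finset (LieSubalgebra ℝ L)) :
    flagMax (s ∪ t) = flagMax s ⊔ flagMax t := by
  simp only [flagMax, Finset.coe_union, sSup_union]

theorem IsFlag.flagMax_mem (hs : IsFlag H s) : flagMax s ∈ s :=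
  IsChain.sSup_mem_of_finset hs.1 hs.2.1

theorem IsFlag.subset (hu : IsFlag H u) (hs : s.Nonempty) (hsu : s ⊆ u) : IsFlag H s :=
  ⟨hs, hu.2.1.mono (Finset.coe_subset.2 hsu), fun K hK => hu.2.2 K (hsu hK)⟩

theorem IsFlag.union (hs : IsFlag H s) (ht : IsFlag H t)
    (hnew : ∀ K ∈ t, K ∉ s → flagMax s < K) : IsFlag H (s ∪ t) := by
  refine ⟨hs.1.mono Finset.subset_union_left, ?_, fun K hK => ?_⟩
  · rw [Finset.coe_union, isChain_union]
    refine ⟨hs.2.1, ht.2.1, fun a ha b hb hab => ?_⟩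
    by_cases hbs : b ∈ s
    · exact hs.2.1 ha hbs hab
    · exact .inl ((le_flagMax ha).trans (hnew b hb hbs).le)
  · rcases Finset.mem_union.1 hK with hK | hK
    exacts [hs.2.2 K hK, ht.2.2 K hK]

def FlagDominates (s t : Finset (LieSubalgebra ℝ L)) : Prop :=
  flagMax s ≤ flagMax t ∧ ∀ K ∈ t, K ∉ s → flagMax s < K

theorem flagDominates_refl (s : Finset (LieSubalgebra ℝ L)) : FlagDominates s s :=
  ⟨le_rfl, fun _ hK hKs => absurd hK hKs⟩

theorem FlagDominates.trans (hst : FlagDominates s t) (htu : FlagDominates t u) :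
    FlagDominates s u := by
  refine ⟨hst.1.trans htu.1, fun K hKu hKs => ?_⟩
  by_cases hKt : K ∈ t
  · exact hst.2 K hKt hKs
  · exact hst.1.trans_lt (htu.2 K hKu hKt)

theorem FlagStep.flagDominates (h : FlagStep H s t) : FlagDominates s t := by
  obtain ⟨hs, -, ⟨K, hK, rfl⟩ | ⟨K, -, hKmax, rfl⟩⟩ := h
  · refine ⟨flagMax_mono (Finset.subset_insert K s), fun K' hK' hK's => ?_⟩
    rcases Finset.mem_insert.1 hK' with rfl | hK'
    exacts [hK, absurd hK' hK's]
  · exact ⟨le_flagMax (Finset.mem_erase.2 ⟨hKmax.symm, hs.flagMax_mem⟩),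
      fun K' hK' hK's => absurd (Finset.mem_of_mem_erase hK') hK's⟩

theorem FlagLE.flagDominates (h : FlagLE H s t) : FlagDominates s t := by
  induction h with
  | refl => exact flagDominates_refl s
  | tail _ hstep ih => exact ih.trans hstep.flagDominates

theorem flagLE_of_subset (hs : IsFlag H s) (hu : IsFlag H u) (hsu : s ⊆ u)
    (hnew : ∀ K ∈ u, K ∉ s → flagMax s < K) : FlagLE H s u := by
  induction hn : (u \ s).card generalizing u with
  | zero =>
    rw [Finset.card_eq_zero, Finset.sdiff_eq_empty_iff_subset] at hn
    obtain rfl := Finset.Subset.antisymm hn hsu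
    exact .refl
  | succ n ih =>
    obtain ⟨K, hK⟩ : (u \ s).Nonempty := Finset.card_pos.1 (by omega)
    rw [Finset.mem_sdiff] at hK
    have hsm : flagMax s < flagMax u := (hnew K hK.1 hK.2).trans_le (le_flagMax hK.1)
    have hms : flagMax u ∉ s := fun h => (le_flagMax h).not_gt hsm
    have hsu' : s ⊆ u.erase (flagMax u) := fun K hK =>
      Finset.mem_erase.2 ⟨fun h => hms (h ▸ hK), hsu hK⟩
    have hu' : IsFlag H (u.erase (flagMax u)) :=
      hu.subset (hs.1.mono hsu') (Finset.erase_subset _ _)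
    have hlt : flagMax (u.erase (flagMax u)) < flagMax u := by
      refine (flagMax_mono (Finset.erase_subset _ _)).lt_of_ne fun h => ?_
      have hmem := hu'.flagMax_mem
      rw [h] at hmem
      exact Finset.notMem_erase _ _ hmem
    refine .tail (ih hu' hsu' (fun K hK => hnew K (Finset.mem_of_mem_erase hK)) ?_)
      ⟨hu', hu, .inl ⟨flagMax u, hlt, (Finset.insert_erase hu.flagMax_mem).symm⟩⟩
    rw [Finset.erase_sdiff_comm, Finset.card_erase_of_mem (Finset.mem_sdiff.2 ⟨hu.flagMax_mem, hms⟩),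
      hn, Nat.add_sub_cancel]

theorem flagLE_of_superset_of_flagMax_eq (hu : IsFlag H u) (ht : IsFlag H t) (htu : t ⊆ u)
    (hmax : flagMax u = flagMax t) : FlagLE H u t := by
  induction hn : (u \ t).card generalizing u with
  | zero =>
    rw [Finset.card_eq_zero, Finset.sdiff_eq_empty_iff_subset] at hn
    obtain rfl := Finset.Subset.antisymm hn htu
    exact .refl
  | succ n ih =>
    obtain ⟨K, hK⟩ : (u \ t).Nonempty := Finset.card_pos.1 (by omega)
    rw [Finset.mem_sdiff] at hK
    have hKmax : K ≠ flagMax u := fun h => hK.2 (h ▸ hmax ▸ ht.flagMax_mem)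
    have htu' : t ⊆ u.erase K := fun K' hK' =>
      Finset.mem_erase.2 ⟨fun h => hK.2 (h ▸ hK'), htu hK'⟩
    have hu' : IsFlag H (u.erase K) := hu.subset (ht.1.mono htu') (Finset.erase_subset _ _)
    refine .head ⟨hu, hu', .inr ⟨K, hK.1, hKmax, rfl⟩⟩ (ih hu' htu' ?_ ?_)
    · exact le_antisymm (hmax ▸ flagMax_mono (Finset.erase_subset _ _)) (flagMax_mono htu')
    · rw [Finset.erase_sdiff_comm, Finset.card_erase_of_mem (Finset.mem_sdiff.2 hK), hn,
        Nat.add_sub_cancel]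

theorem FlagDominates.flagLE (hs : IsFlag H s) (ht : IsFlag H t) (h : FlagDominates s t) :
    FlagLE H s t := by
  obtain ⟨hle, hnew⟩ := h
  have hst : IsFlag H (s ∪ t) := hs.union ht hnew
  have hmax : flagMax (s ∪ t) = flagMax t := by rw [flagMax_union, sup_eq_right.2 hle]
  have hnew' : ∀ K ∈ s ∪ t, K ∉ s → flagMax s < K := fun K hK hKs =>
    hnew K ((Finset.mem_union.1 hK).resolve_left hKs) hKs
  exact (flagLE_of_subset hs hst Finset.subset_union_left hnew').trans
    (flagLE_of_superset_of_flagMax_eq hst ht Finset.subset_union_right hmax)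

end

theorem flagLE_iff_general (H : LieSubalgebra ℝ L)
    (s t : Finset (LieSubalgebra ℝ L)) (hs : IsFlag H s) (ht : IsFlag H t) :
    FlagLE H s t ↔ flagMax s ≤ flagMax t ∧ ∀ K ∈ t, K ∉ s → flagMax s < K :=
  ⟨FlagLE.flagDominates, FlagDominates.flagLE hs ht⟩

theorem flagLE_iff (H : LieSubalgebra ℝ L) (hprop : H ≠ ⊤)
    (s t : Finset (LieSubalgebra ℝ L)) (hs : IsFlag H s) (ht : IsFlag H t) :
    FlagLE H s t ↔ flagMax s ≤ flagMax t ∧ ∀ K ∈ t, K ∉ s → flagMax s < K :=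
  flagLE_iff_general H s t hs ht
end

section
/- Assume G/H is almost effective, i.e. 𝔥 contains no nonzero ideal of 𝔤. Suppose 𝔪 = 𝔪_1 ⊕ 𝔪_2 is a direct sum of subspaces with Q(𝔪_1, 𝔪_2) = 0, ⁅𝔥, 𝔪_i⁆ ⊆ 𝔪_i for i = 1, 2, ⁅𝔪_1, 𝔪_1⁆ ⊆ 𝔥 ⊕ 𝔪_1 and ⁅𝔪_2, 𝔪_2⁆ ⊆ 𝔥 ⊕ 𝔪_2. Set 𝔥_i := pr_𝔥(⁅𝔪_i, 𝔪_i⁆), the image of ⁅𝔪_i, 𝔪_i⁆ under the Q-orthogonal projection of 𝔤 onto 𝔥, and 𝔤_i := 𝔥_i ⊕ 𝔪_i. Then ⁅𝔪_1, 𝔪_2⁆ = 0, 𝔤_1 and 𝔤_2 are Q-orthogonal ideals of 𝔤, and 𝔤 = 𝔤_1 ⊕ 𝔤_2. -/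
/-!
Since `𝔥 ⊕ 𝔪₁` and `𝔥 ⊕ 𝔪₂` are orthogonal to `𝔪₂` and `𝔪₁`, skew-adjointness of `ad` shows
that `⁅𝔪₁, 𝔪₂⁆` lies in `𝔪 = 𝔪₁ ⊕ 𝔪₂` and is orthogonal to it, hence vanishes.
As `⁅𝔪ᵢ, 𝔪ᵢ⁆ ⊆ 𝔥 ⊕ 𝔪ᵢ`, `𝔤ᵢ` is just `𝔪ᵢ + ⁅𝔪ᵢ, 𝔪ᵢ⁆`; by Jacobi it is stable under `ad 𝔥`
and `ad 𝔪ᵢ` and killed by `ad 𝔪ⱼ`, so it is an ideal, and `⁅𝔪₁, 𝔤₂⁆ = 0` gives `𝔤₁ ⟂ 𝔤₂`.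
Finally the orthogonal complement of the ideal `𝔤₁ + 𝔤₂ ⊇ 𝔪` is an ideal contained in `𝔥`,
so it is zero by almost effectiveness.
-/

open scoped RealInnerProductSpace Classical
open Module Set Filter

variable {L : Type*} [NormedAddCommGroup L] [InnerProductSpace ℝ L] [FiniteDimensional ℝ L]
variable (𝔩 : CompactLieBracket L) (H : Submodule ℝ L)

/-- The orthogonal projection of `L` onto `K`, as an endomorphism of `L`. -/
noncomputable def projL (K : Submodule ℝ L) : L →L[ℝ] L :=
  K.subtypeL.comp K.orthogonalProjectionOnto

/-- The span of all brackets of elements of `m`. -/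
def brSpan (m : Submodule ℝ L) : Submodule ℝ L :=
  Submodule.span ℝ { z : L | ∃ x ∈ m, ∃ y ∈ m, z = 𝔩.br x y }

/-- `𝔤ᵢ = 𝔥ᵢ ⊕ 𝔪ᵢ`, where `𝔥ᵢ = pr_𝔥 ⁅𝔪ᵢ, 𝔪ᵢ⁆`. -/
noncomputable def idealPart (m : Submodule ℝ L) : Submodule ℝ L :=
  Submodule.map ((projL H : L →L[ℝ] L) : L →ₗ[ℝ] L) (brSpan 𝔩 m) ⊔ m

theorem Submodule.le_orthogonal_sup_of_sup_eq {E : Type*} [NormedAddCommGroup E]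
    [InnerProductSpace ℝ E] {K U W : Submodule ℝ E} (hsup : U ⊔ W = Kᗮ) (horth : U ⟂ W) :
    W ≤ (K ⊔ U)ᗮ := by
  rw [← Submodule.inf_orthogonal]
  exact le_inf (hsup ▸ le_sup_right) horth.ge

namespace CompactLieBracket

variable {V : Type*} [NormedAddCommGroup V] [InnerProductSpace ℝ V] (𝔩 : CompactLieBracket V)

theorem br_anticomm (x y : V) : 𝔩.br x y = -𝔩.br y x := by
  have h := 𝔩.br_self (x + y)
  simp only [map_add, LinearMap.add_apply, 𝔩.br_self, zero_add, add_zero] at h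
  exact eq_neg_of_add_eq_zero_right h

theorem br_leibniz (x y z : V) :
    𝔩.br x (𝔩.br y z) = 𝔩.br (𝔩.br x y) z + 𝔩.br y (𝔩.br x z) := by
  have h := 𝔩.jacobi x y z
  rw [𝔩.br_anticomm z x, map_neg, 𝔩.br_anticomm z (𝔩.br x y)] at h
  rw [← sub_eq_zero, ← h]
  abel

theorem inner_br_left (x y z : V) : ⟪𝔩.br x y, z⟫ = -⟪y, 𝔩.br x z⟫ := by
  rw [𝔩.br_anticomm, inner_neg_left, 𝔩.skew]

theorem br_mem_brSpan {m : Submodule ℝ V} {x y : V} (hx : x ∈ m) (hy : y ∈ m) :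
    𝔩.br x y ∈ brSpan 𝔩 m :=
  Submodule.subset_span ⟨x, hx, y, hy, rfl⟩

theorem brSpan_le_iff {m S : Submodule ℝ V} :
    brSpan 𝔩 m ≤ S ↔ ∀ x ∈ m, ∀ y ∈ m, 𝔩.br x y ∈ S := by
  refine Submodule.span_le.trans ⟨fun h x hx y hy => h ⟨x, hx, y, hy, rfl⟩, ?_⟩
  rintro h _ ⟨x, hx, y, hy, rfl⟩
  exact h x hx y hy

def IsIdeal (I : Submodule ℝ V) : Prop := ∀ x : V, ∀ y ∈ I, 𝔩.br x y ∈ I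

def Centralizes (A B : Submodule ℝ V) : Prop := ∀ x ∈ A, ∀ y ∈ B, 𝔩.br x y = 0

def normalizer (S : Submodule ℝ V) : Submodule ℝ V where
  carrier := {x | S ≤ S.comap (𝔩.br x)}
  add_mem' {x y} hx hy z hz := by
    simpa only [Submodule.mem_comap, map_add, LinearMap.add_apply] using
      add_mem (Submodule.mem_comap.mp (hx hz)) (Submodule.mem_comap.mp (hy hz))
  zero_mem' z _ := by simp
  smul_mem' c x hx z hz := by simpa using S.smul_mem c (hx hz)

variable {𝔩}

theorem mem_normalizer {S : Submodule ℝ V} {x : V} :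
    x ∈ 𝔩.normalizer S ↔ S ≤ S.comap (𝔩.br x) :=
  Iff.rfl

theorem isIdeal_iff_normalizer_eq_top {S : Submodule ℝ V} :
    𝔩.IsIdeal S ↔ 𝔩.normalizer S = ⊤ := by
  rw [Submodule.eq_top_iff']
  rfl

theorem IsIdeal.sup {I J : Submodule ℝ V} (hI : 𝔩.IsIdeal I) (hJ : 𝔩.IsIdeal J) :
    𝔩.IsIdeal (I ⊔ J) := by
  intro x y hy
  obtain ⟨a, ha, b, hb, rfl⟩ := Submodule.mem_sup.mp hy
  rw [map_add]
  exact add_mem (Submodule.mem_sup_left (hI x a ha)) (Submodule.mem_sup_right (hJ x b hb))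

theorem IsIdeal.orthogonal {I : Submodule ℝ V} (hI : 𝔩.IsIdeal I) : 𝔩.IsIdeal Iᗮ :=
  fun x y hy => (Submodule.mem_orthogonal' _ _).mpr fun z hz => by
    rw [inner_br_left, (Submodule.mem_orthogonal' _ _).mp hy _ (hI x z hz), neg_zero]

theorem mem_normalizer_sup_brSpan {m : Submodule ℝ V} {x : V} (hx : ∀ y ∈ m, 𝔩.br x y ∈ m) :
    x ∈ 𝔩.normalizer (m ⊔ brSpan 𝔩 m) := by
  rw [mem_normalizer]
  refine sup_le (fun y hy => Submodule.mem_sup_left (hx y hy)) (brSpan_le_iff 𝔩 |>.mpr ?_)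
  intro a ha b hb
  rw [Submodule.mem_comap, br_leibniz]
  exact Submodule.mem_sup_right (add_mem (br_mem_brSpan 𝔩 (hx a ha) hb)
    (br_mem_brSpan 𝔩 ha (hx b hb)))

namespace Centralizes

variable {A B C : Submodule ℝ V}

theorem symm (h : 𝔩.Centralizes A B) : 𝔩.Centralizes B A :=
  fun x hx y hy => by rw [br_anticomm, h y hy x hx, neg_zero]

theorem brSpan_right (h : 𝔩.Centralizes A B) : 𝔩.Centralizes A (brSpan 𝔩 B) := by
  intro x hx y hy
  refine LinearMap.mem_ker.mp (brSpan_le_iff 𝔩 |>.mpr (fun a ha b hb => ?_) hy)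
  rw [LinearMap.mem_ker, br_leibniz, h x hx a ha, h x hx b hb, map_zero, map_zero,
    LinearMap.zero_apply, add_zero]

theorem sup_brSpan_right (h : 𝔩.Centralizes A B) : 𝔩.Centralizes A (B ⊔ brSpan 𝔩 B) := by
  intro x hx y hy
  obtain ⟨b, hb, w, hw, rfl⟩ := Submodule.mem_sup.mp hy
  rw [map_add, h x hx b hb, h.brSpan_right x hx w hw, add_zero]

theorem brSpan_isOrtho (h : 𝔩.Centralizes A C) : brSpan 𝔩 A ⟂ C := by
  refine Submodule.isOrtho_iff_le.mpr (brSpan_le_iff 𝔩 |>.mpr fun a ha b hb => ?_)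
  refine (Submodule.mem_orthogonal' _ _).mpr fun c hc => ?_
  rw [𝔩.skew, h b hb c hc, inner_zero_right]

theorem sup_brSpan_isOrtho (horth : A ⟂ B) (h : 𝔩.Centralizes A B) :
    A ⊔ brSpan 𝔩 A ⟂ B ⊔ brSpan 𝔩 B :=
  Submodule.isOrtho_sup_left.mpr
    ⟨Submodule.isOrtho_sup_right.mpr ⟨horth, h.symm.brSpan_isOrtho.symm⟩,
      h.sup_brSpan_right.brSpan_isOrtho⟩

end Centralizes

theorem centralizes_of_sup_eq_orthogonal {H m₁ m₂ : Submodule ℝ V} (hsup : m₁ ⊔ m₂ = Hᗮ)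
    (horth : m₁ ⟂ m₂) (hHm₂ : ∀ Z ∈ H, ∀ x ∈ m₂, 𝔩.br Z x ∈ m₂)
    (h₁₁ : ∀ x ∈ m₁, ∀ y ∈ m₁, 𝔩.br x y ∈ H ⊔ m₁)
    (h₂₂ : ∀ x ∈ m₂, ∀ y ∈ m₂, 𝔩.br x y ∈ H ⊔ m₂) :
    𝔩.Centralizes m₁ m₂ := by
  intro x hx y hy
  have hx' := (Submodule.mem_orthogonal' _ x).mp
    (Submodule.le_orthogonal_sup_of_sup_eq (sup_comm m₁ m₂ ▸ hsup) horth.symm hx)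
  have hy' := (Submodule.mem_orthogonal' _ y).mp
    (Submodule.le_orthogonal_sup_of_sup_eq hsup horth hy)
  have hm : 𝔩.br x y ∈ m₁ ⊔ m₂ := by
    refine hsup ▸ (Submodule.mem_orthogonal' _ _).mpr fun Z hZ => ?_
    rw [𝔩.skew, 𝔩.br_anticomm y, inner_neg_right,
      hx' _ (Submodule.mem_sup_right (hHm₂ Z hZ y hy)), neg_zero]
  have hperp : 𝔩.br x y ∈ (m₁ ⊔ m₂)ᗮ := by
    rw [← Submodule.inf_orthogonal]
    refine ⟨(Submodule.mem_orthogonal' _ _).mpr fun a ha => ?_,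
      (Submodule.mem_orthogonal' _ _).mpr fun b hb => ?_⟩
    · rw [inner_br_left, hy' _ (h₁₁ x hx a ha), neg_zero]
    · rw [𝔩.skew, hx' _ (h₂₂ y hy b hb)]
  simpa using (Submodule.inf_orthogonal_eq_bot _).le ⟨hm, hperp⟩

end CompactLieBracket

section Splitting

open CompactLieBracket

variable {𝔩 H} {m m₁ m₂ : Submodule ℝ L}

theorem sub_projL_mem (hm : m ≤ Hᗮ) {w : L} (hw : w ∈ H ⊔ m) : w - projL H w ∈ m := by
  obtain ⟨h, hh, a, ha, rfl⟩ := Submodule.mem_sup.mp hw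
  rw [show projL H (h + a) = h from H.eq_starProjection_of_mem_orthogonal' hh (hm ha) rfl,
    add_sub_cancel_left]
  exact ha

theorem idealPart_eq_sup_brSpan (hm : m ≤ Hᗮ) (hbr : ∀ x ∈ m, ∀ y ∈ m, 𝔩.br x y ∈ H ⊔ m) :
    idealPart 𝔩 H m = m ⊔ brSpan 𝔩 m := by
  have hsub : ∀ w ∈ brSpan 𝔩 m, w - projL H w ∈ m := fun w hw =>
    sub_projL_mem hm ((brSpan_le_iff 𝔩).mpr hbr hw)
  refine le_antisymm (sup_le ?_ le_sup_left) (sup_le le_sup_right fun w hw => ?_)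
  · rintro _ ⟨w, hw, rfl⟩
    change projL H w ∈ _
    rw [show projL H w = w - (w - projL H w) by abel]
    exact sub_mem (Submodule.mem_sup_right hw) (Submodule.mem_sup_left (hsub w hw))
  · rw [show w = projL H w + (w - projL H w) by abel]
    exact add_mem (Submodule.mem_sup_left ⟨w, hw, rfl⟩) (Submodule.mem_sup_right (hsub w hw))

theorem isIdeal_sup_brSpan (hsup : m₁ ⊔ m₂ = Hᗮ) (hHm₁ : ∀ Z ∈ H, ∀ x ∈ m₁, 𝔩.br Z x ∈ m₁)
    (h₁₁ : ∀ x ∈ m₁, ∀ y ∈ m₁, 𝔩.br x y ∈ H ⊔ m₁) (hcomm : 𝔩.Centralizes m₂ m₁) :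
    𝔩.IsIdeal (m₁ ⊔ brSpan 𝔩 m₁) := by
  rw [isIdeal_iff_normalizer_eq_top, eq_top_iff, ← H.sup_orthogonal_of_hasOrthogonalProjection,
    ← hsup]
  refine sup_le (fun Z hZ => mem_normalizer_sup_brSpan (hHm₁ Z hZ)) (sup_le (fun a ha => ?_)
    fun b hb y hy => by simp [hcomm.sup_brSpan_right b hb y hy])
  have hHm : H ⊔ m₁ ≤ (m₁ ⊔ brSpan 𝔩 m₁).comap (𝔩.br a) := by
    refine sup_le (fun Z hZ => ?_) fun b hb => Submodule.mem_sup_right (br_mem_brSpan 𝔩 ha hb)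
    rw [Submodule.mem_comap, br_anticomm]
    exact neg_mem (Submodule.mem_sup_left (hHm₁ Z hZ a ha))
  exact sup_le (le_sup_right.trans hHm) (((brSpan_le_iff 𝔩).mpr h₁₁).trans hHm)

theorem eq_top_of_isIdeal_of_orthogonal_le
    (heff : ∀ I : Submodule ℝ L, 𝔩.IsIdeal I → I ≤ H → I = ⊥) {J : Submodule ℝ L}
    (hJ : 𝔩.IsIdeal J) (hHJ : Hᗮ ≤ J) : J = ⊤ := by
  rw [← Submodule.orthogonal_eq_bot_iff]
  refine heff _ hJ.orthogonal ?_
  simpa only [Submodule.orthogonal_orthogonal] using Submodule.orthogonal_le hHJ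

end Splitting

theorem splitting_theorem
    (heff : ∀ I : Submodule ℝ L, (∀ x : L, ∀ y ∈ I, 𝔩.br x y ∈ I) → I ≤ H → I = ⊥)
    (m₁ m₂ : Submodule ℝ L)
    (hsup : m₁ ⊔ m₂ = Hᗮ)
    (horth : ∀ x ∈ m₁, ∀ y ∈ m₂, ⟪x, y⟫ = 0)
    (hHm₁ : ∀ Z ∈ H, ∀ x ∈ m₁, 𝔩.br Z x ∈ m₁)
    (hHm₂ : ∀ Z ∈ H, ∀ x ∈ m₂, 𝔩.br Z x ∈ m₂)
    (h₁₁ : ∀ x ∈ m₁, ∀ y ∈ m₁, 𝔩.br x y ∈ H ⊔ m₁)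
    (h₂₂ : ∀ x ∈ m₂, ∀ y ∈ m₂, 𝔩.br x y ∈ H ⊔ m₂) :
    (∀ x ∈ m₁, ∀ y ∈ m₂, 𝔩.br x y = 0) ∧
    (∀ x : L, ∀ y ∈ idealPart 𝔩 H m₁, 𝔩.br x y ∈ idealPart 𝔩 H m₁) ∧
    (∀ x : L, ∀ y ∈ idealPart 𝔩 H m₂, 𝔩.br x y ∈ idealPart 𝔩 H m₂) ∧
    (∀ x ∈ idealPart 𝔩 H m₁, ∀ y ∈ idealPart 𝔩 H m₂, ⟪x, y⟫ = 0) ∧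
    idealPart 𝔩 H m₁ ⊔ idealPart 𝔩 H m₂ = ⊤ ∧
    idealPart 𝔩 H m₁ ⊓ idealPart 𝔩 H m₂ = ⊥ := by
  have horth' : m₁ ⟂ m₂ := Submodule.isOrtho_iff_inner_eq.mpr horth
  have hcomm : 𝔩.Centralizes m₁ m₂ :=
    CompactLieBracket.centralizes_of_sup_eq_orthogonal hsup horth' hHm₂ h₁₁ h₂₂
  have hI₁ := isIdeal_sup_brSpan hsup hHm₁ h₁₁ hcomm.symm
  have hI₂ := isIdeal_sup_brSpan (sup_comm m₁ m₂ ▸ hsup) hHm₂ h₂₂ hcomm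
  have hperp := hcomm.sup_brSpan_isOrtho horth'
  rw [idealPart_eq_sup_brSpan (hsup ▸ le_sup_left) h₁₁,
    idealPart_eq_sup_brSpan (hsup ▸ le_sup_right) h₂₂]
  refine ⟨hcomm, hI₁, hI₂, fun x hx y hy => hperp.inner_eq hx hy, ?_, hperp.disjoint.eq_bot⟩
  refine eq_top_of_isIdeal_of_orthogonal_le heff (hI₁.sup hI₂) ?_
  rw [← hsup]
  exact sup_le_sup le_sup_left le_sup_left
end
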